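/- arXiv:2205.03945 — 2 statements merged into one kernel-verified Lean document; each statement's English description precedes it below -/
import Mathlib

section
/- The two closed horoball regions B₀ = { (x₁,x₂,x₃) ∈ ℝ³ : x₁² + x₂² + 2(x₃ − 1/2)² ≤ 1/2 } and B₁ = { (x₁,x₂,x₃) ∈ ℝ³ : x₁² + x₃² + 5(x₂ + 4/5)² ≤ 1/5 } satisfy B₀ ∩ B₁ = {(0, −2/3, 1/3)}. (B₀ is the horoball with parameter s₀ = 0 centered at the ideal point (0,0,1) and B₁ is the horoball with parameter s₁ = 3/5 centered at the ideal point (0,−1,0); they are mutually tangent, as in the optimal horoball packings of the doubly asymptotic nonarithmetic Coxeter simplex tilings.) -/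
/-- The closed horoball with parameter `s₀ = 0` centered at the ideal point
`(0,0,1)` and the closed horoball with parameter `s₁ = 3/5` centered at the ideal point
`(0,−1,0)` intersect exactly in the single point `(0, −2/3, 1/3)`. -/
theorem horoballs_tangent_nonarithmetic :
    {p : ℝ × ℝ × ℝ | p.1 ^ 2 + p.2.1 ^ 2 + 2 * (p.2.2 - 1 / 2) ^ 2 ≤ 1 / 2} ∩
    {p : ℝ × ℝ × ℝ | p.1 ^ 2 + p.2.2 ^ 2 + 5 * (p.2.1 + 4 / 5) ^ 2 ≤ 1 / 5} =
    {((0 : ℝ), (-2 / 3 : ℝ), (1 / 3 : ℝ))} := by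
  ext ⟨x, y, z⟩
  simp only [Set.mem_inter_iff, Set.mem_setOf_eq, Set.mem_singleton_iff, Prod.mk.injEq]
  constructor
  · rintro ⟨h1, h2⟩
    have key : 2 * x ^ 2 + 6 * (y + 2 / 3) ^ 2 + 3 * (z - 1 / 3) ^ 2 ≤ 0 := by nlinarith
    have hx : x = 0 := by nlinarith [sq_nonneg (y + 2 / 3), sq_nonneg (z - 1 / 3), sq_nonneg x]
    have hy : y = -2 / 3 := by nlinarith [sq_nonneg (y + 2 / 3), sq_nonneg (z - 1 / 3), sq_nonneg x]
    have hz : z = 1 / 3 := by nlinarith [sq_nonneg (y + 2 / 3), sq_nonneg (z - 1 / 3), sq_nonneg x]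
    exact ⟨hx, hy, hz⟩
  · rintro ⟨hx, hy, hz⟩
    subst hx hy hz
    norm_num
end

section
/- Let H₁ = (1,0,0,0), H₂ = (1, 3/7, −√3/7, 1/7), H₃ = (1, 3/7, √3/7, 1/7) in ℝ⁴, and for i ≠ j set d_{ij} = arccosh( −⟨H_i,H_j⟩ / √(⟨H_i,H_i⟩⟨H_j,H_j⟩) ) and L_{ij} = 2 sinh(d_{ij}/2). Then cosh d_{12} = cosh d_{13} = cosh d_{23} = 7/6, hence L_{12} = L_{13} = L_{23} = 1/√3, and the Euclidean area of a triangle with all three side lengths equal to 1/√3 is √3/12 = 1/(4√3). (Hence, by Bolyai's formula, the piece of the maximal horoball contained in the fundamental simplex of the Coxeter tiling [3,3^{[3]}] has hyperbolic volume (1/2)·(√3/12) = 1/(8√3).) -/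
/-!
All three Lorentzian products are explicit, and in each case
`-⟨Hᵢ,Hⱼ⟩ / √(⟨Hᵢ,Hᵢ⟩⟨Hⱼ,Hⱼ⟩) = 7/6`. Since `cosh d = 1 + 2 sinh² (d/2)`, the horocyclic arc
over a chord of length `d` is `2 sinh (d/2) = √(2 (cosh d - 1)) = √(1/3)`, and an equilateral
triangle of side `a` has area `√3 a² / 4`.
-/

open Real

def lor (x y : Fin 4 → ℝ) : ℝ :=
  -(x 0 * y 0) + x 1 * y 1 + x 2 * y 2 + x 3 * y 3

noncomputable def arcosh' (x : ℝ) : ℝ := Real.log (x + Real.sqrt (x ^ 2 - 1))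

noncomputable def heronArea (a b c : ℝ) : ℝ :=
  (1 / 4) * Real.sqrt ((a + b + c) * (-a + b + c) * (a - b + c) * (a + b - c))

lemma arcosh'_eq_arcosh : arcosh' = Real.arcosh := rfl

lemma lor_vecCons (a₀ a₁ a₂ a₃ b₀ b₁ b₂ b₃ : ℝ) :
    lor ![a₀, a₁, a₂, a₃] ![b₀, b₁, b₂, b₃] = -(a₀ * b₀) + a₁ * b₁ + a₂ * b₂ + a₃ * b₃ := rfl

lemma neg_lor_div_sqrt_eq {x y : Fin 4 → ℝ} {a b : ℝ} (ha : 0 ≤ a) (hb : 0 ≤ b)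
    (hx : lor x x = -a ^ 2) (hy : lor y y = -b ^ 2) :
    -lor x y / √(lor x x * lor y y) = -lor x y / (a * b) := by
  rw [hx, hy, neg_mul_neg, ← mul_pow, sqrt_sq (mul_nonneg ha hb)]

lemma two_mul_sinh_half {t : ℝ} (ht : 0 ≤ t) : 2 * sinh (t / 2) = √(2 * (cosh t - 1)) := by
  have hcosh : cosh t = 1 + 2 * sinh (t / 2) ^ 2 := by
    have := cosh_two_mul (t / 2)
    rw [mul_div_cancel₀ t two_ne_zero, cosh_sq] at this
    linear_combination this
  rw [hcosh, show 2 * (1 + 2 * sinh (t / 2) ^ 2 - 1) = (2 * sinh (t / 2)) ^ 2 by ring,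
    sqrt_sq (by positivity)]

lemma two_mul_sinh_half_arcosh {x : ℝ} (hx : 1 ≤ x) :
    2 * sinh (arcosh x / 2) = √(2 * (x - 1)) := by
  rw [two_mul_sinh_half (arcosh_nonneg hx), cosh_arcosh hx]

lemma heronArea_self (a : ℝ) : heronArea a a a = √3 / 4 * a ^ 2 := by
  rw [heronArea, show (a + a + a) * (-a + a + a) * (a - a + a) * (a + a - a) = 3 * (a ^ 2) ^ 2 by
    ring, sqrt_mul (by norm_num), sqrt_sq (sq_nonneg a)]
  ring

/-- For the points `H₁, H₂, H₃` on the maximal horoball boundary of the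
Coxeter simplex `[3,3^{[3]}]`, all pairwise hyperbolic distances satisfy
`cosh d = 7/6`, the horospherical side lengths are all `1/√3`, and the Euclidean area of
the corresponding horospheric triangle is `√3/12 = 1/(4√3)`. -/
theorem horoball_piece_336 :
    let H₁ : Fin 4 → ℝ := ![1, 0, 0, 0]
    let H₂ : Fin 4 → ℝ := ![1, 3/7, -(Real.sqrt 3)/7, 1/7]
    let H₃ : Fin 4 → ℝ := ![1, 3/7, Real.sqrt 3/7, 1/7]
    let d : (Fin 4 → ℝ) → (Fin 4 → ℝ) → ℝ := fun x y =>
      arcosh' (-(lor x y) / Real.sqrt (lor x x * lor y y))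
    let L : (Fin 4 → ℝ) → (Fin 4 → ℝ) → ℝ := fun x y => 2 * Real.sinh (d x y / 2)
    (Real.cosh (d H₁ H₂) = 7/6 ∧ Real.cosh (d H₁ H₃) = 7/6 ∧
      Real.cosh (d H₂ H₃) = 7/6) ∧
    (L H₁ H₂ = 1 / Real.sqrt 3 ∧ L H₁ H₃ = 1 / Real.sqrt 3 ∧ L H₂ H₃ = 1 / Real.sqrt 3) ∧
    heronArea (1 / Real.sqrt 3) (1 / Real.sqrt 3) (1 / Real.sqrt 3) = Real.sqrt 3 / 12 ∧
    Real.sqrt 3 / 12 = 1 / (4 * Real.sqrt 3) := by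
  intro H₁ H₂ H₃ d L
  have s3 : √3 ^ 2 = 3 := sq_sqrt (by norm_num)
  have of_ratio : ∀ x y, -lor x y / √(lor x x * lor y y) = 7 / 6 →
      cosh (d x y) = 7 / 6 ∧ L x y = 1 / √3 := by
    intro x y h
    have h76 : (1 : ℝ) ≤ 7 / 6 := by norm_num
    simp only [d, L, h, arcosh'_eq_arcosh, cosh_arcosh h76, two_mul_sinh_half_arcosh h76,
      true_and]
    rw [show 2 * ((7 : ℝ) / 6 - 1) = 1 / 3 by norm_num, sqrt_div' _ (by norm_num), sqrt_one]
  have h₁ : lor H₁ H₁ = -1 ^ 2 := by norm_num [H₁, lor_vecCons]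
  have h₂ : lor H₂ H₂ = -(6 / 7) ^ 2 := by rw [lor_vecCons]; linear_combination s3 / 49
  have h₃ : lor H₃ H₃ = -(6 / 7) ^ 2 := by rw [lor_vecCons]; linear_combination s3 / 49
  have h₁₂ : lor H₁ H₂ = -1 := by norm_num [H₁, H₂, lor_vecCons]
  have h₁₃ : lor H₁ H₃ = -1 := by norm_num [H₁, H₃, lor_vecCons]
  have h₂₃ : lor H₂ H₃ = -(6 / 7) := by rw [lor_vecCons]; linear_combination -s3 / 49
  obtain ⟨c₁₂, L₁₂⟩ := of_ratio H₁ H₂ (by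
    rw [neg_lor_div_sqrt_eq (by norm_num) (by norm_num) h₁ h₂, h₁₂]; norm_num)
  obtain ⟨c₁₃, L₁₃⟩ := of_ratio H₁ H₃ (by
    rw [neg_lor_div_sqrt_eq (by norm_num) (by norm_num) h₁ h₃, h₁₃]; norm_num)
  obtain ⟨c₂₃, L₂₃⟩ := of_ratio H₂ H₃ (by
    rw [neg_lor_div_sqrt_eq (by norm_num) (by norm_num) h₂ h₃, h₂₃]; norm_num)
  refine ⟨⟨c₁₂, c₁₃, c₂₃⟩, ⟨L₁₂, L₁₃, L₂₃⟩, ?_, ?_⟩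
  · rw [heronArea_self, div_pow, s3]
    ring
  · field_simp
    linear_combination 4 * s3
end
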